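/- Simplicity of the quotient module: the 𝒢-module (ℂ[t^{±1}] ⊕ ℂ[t^{±1}]‾)/ℂ with actions L_m·tⁿ = -n t^{m+n}, L_m·t̄ᵏ = -(k+m/2)t̄^{m+k}, H_m·t̄ᵏ = t̄^{m+k}, G⁺_m·tⁿ = -2n t̄^{m+n}, G⁻_m·t̄ᵏ = t^{m+k} (all other actions zero) has no proper nonzero submodule invariant under all the operators L_m, H_m, G^±_m. -/

import Mathlib

/-- The operator on `ℂ[t,t⁻¹]` sending the basis vector `tⁿ ↦ c n · t^{m+n}`. -/
noncomputable def wop (c : ℤ → ℂ) (m : ℤ) : (ℤ →₀ ℂ) →ₗ[ℂ] (ℤ →₀ ℂ) :=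
  Finsupp.lsum ℂ fun n => c n • Finsupp.lsingle (m + n)

/-- The space `ℂ[t,t⁻¹] ⊕ ℂ[t,t⁻¹]‾`. -/
abbrev VV : Type := (ℤ →₀ ℂ) × (ℤ →₀ ℂ)

/-- `L_m : tⁿ ↦ -n t^{m+n}`, `t̄ᵏ ↦ -(k + m/2) t̄^{m+k}`. -/
noncomputable def oL (m : ℤ) : VV →ₗ[ℂ] VV :=
  (wop (fun n => -(n : ℂ)) m).prodMap (wop (fun k => -((k : ℂ) + (m : ℂ) / 2)) m)

/-- `H_m : tⁿ ↦ 0`, `t̄ᵏ ↦ t̄^{m+k}`. -/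
noncomputable def oH (m : ℤ) : VV →ₗ[ℂ] VV :=
  (0 : (ℤ →₀ ℂ) →ₗ[ℂ] (ℤ →₀ ℂ)).prodMap (wop (fun _ => 1) m)

/-- `G⁺_m : tⁿ ↦ -2n t̄^{m+n}`, `t̄ᵏ ↦ 0`. -/
noncomputable def oGp (m : ℤ) : VV →ₗ[ℂ] VV :=
  LinearMap.prod 0 ((wop (fun n => -2 * (n : ℂ)) m).comp (LinearMap.fst ℂ _ _))

/-- `G⁻_m : t̄ᵏ ↦ t^{m+k}`, `tⁿ ↦ 0`. -/
noncomputable def oGm (m : ℤ) : VV →ₗ[ℂ] VV :=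
  LinearMap.prod ((wop (fun _ => 1) m).comp (LinearMap.snd ℂ _ _)) 0

/-- The line `ℂ·1` in the first summand. -/
noncomputable def Kone : Submodule ℂ VV :=
  Submodule.span ℂ {((Finsupp.single (0 : ℤ) (1 : ℂ)), (0 : ℤ →₀ ℂ))}

/-!
`L₀` acts diagonally on each summand with pairwise distinct eigenvalues, so an invariant subspace
contains every basis component of each of its vectors. A vector outside `ℂ·1` therefore yields,
via `H₀` or `G⁺₀`, some barred basis vector `t̄ᵏ` in the submodule; then `H_m` produces every `t̄ʲ`
and `G⁻_m` every `tⁿ`.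
-/

open Finsupp Polynomial
open LinearMap (inl inr)

theorem Finsupp.single_apply_mem_of_le_comap {K ι : Type*} [Field K]
    {D : Module.End K (ι →₀ K)} {c : ι → K} (hc : Function.Injective c)
    (hD : ∀ i x, D (single i x) = c i • single i x)
    {S : Submodule K (ι →₀ K)} (hS : S ≤ S.comap D) {b : ι →₀ K} (hb : b ∈ S) (k : ι) :
    single k (b k) ∈ S := by
  classical
  -- The Lagrange polynomial vanishing at the other eigenvalues in `b` projects `b` onto its
  -- `k`-th component.
  set p : K[X] := ∏ j ∈ b.support.erase k, (X - C (c j))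
  have hp_eval : ∀ i x, aeval D p (single i x) = p.eval (c i) • single i x := by
    intro i x
    rcases eq_or_ne x 0 with rfl | hx
    · simp
    · exact Module.End.aeval_apply_of_hasEigenvector
        ⟨Module.End.mem_eigenspace_iff.2 (hD i x), single_ne_zero.2 hx⟩
  have hp_ne : p.eval (c k) ≠ 0 := by
    rw [eval_prod, Finset.prod_ne_zero_iff]
    intro j hj
    simpa [sub_eq_zero] using hc.ne (Finset.ne_of_mem_erase hj).symm
  have hp_b : aeval D p b = p.eval (c k) • single k (b k) := by
    conv_lhs => rw [← b.sum_single]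
    rw [map_finsuppSum, Finsupp.sum, Finset.sum_eq_single k]
    · exact hp_eval k (b k)
    · intro j hj hjk
      rw [hp_eval, eval_prod, Finset.prod_eq_zero (Finset.mem_erase.2 ⟨hjk, hj⟩) (by simp),
        zero_smul]
    · intro hk
      rw [notMem_support_iff.1 hk, single_zero, map_zero]
  have hmem := S.smul_mem (p.eval (c k))⁻¹ (aeval_apply_smul_mem_of_le_comap hb p D hS)
  rwa [hp_b, inv_smul_smul₀ hp_ne] at hmem

theorem Finsupp.eq_top_of_forall_single_one_mem {R ι : Type*} [Semiring R]
    {S : Submodule R (ι →₀ R)} (h : ∀ i, single i 1 ∈ S) : S = ⊤ := by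
  rw [eq_top_iff, ← Finsupp.basisSingleOne.span_eq, Submodule.span_le, coe_basisSingleOne]
  exact Set.range_subset_iff.2 h

theorem wop_single (c : ℤ → ℂ) (m n : ℤ) (x : ℂ) :
    wop c m (single n x) = single (m + n) (c n * x) := by
  rw [wop, Finsupp.lsum_single, LinearMap.smul_apply, lsingle_apply, smul_single']

theorem wop_zero_single (c : ℤ → ℂ) (n : ℤ) (x : ℂ) :
    wop c 0 (single n x) = c n • single n x := by
  rw [wop_single, zero_add, smul_single, smul_eq_mul]

theorem wop_one_zero : wop (fun _ => 1) 0 = LinearMap.id :=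
  Finsupp.lhom_ext fun n x => by rw [wop_single, zero_add, one_mul, LinearMap.id_apply]

theorem single_one_mem_of_wop_zero_invariant {c : ℤ → ℂ} (hc : Function.Injective c)
    {S : Submodule ℂ (ℤ →₀ ℂ)} (hS : S ≤ S.comap (wop c 0)) {b : ℤ →₀ ℂ} (hb : b ∈ S)
    {k : ℤ} (hk : b k ≠ 0) : single k 1 ∈ S := by
  have h := S.smul_mem (b k)⁻¹ (single_apply_mem_of_le_comap hc (wop_zero_single c) hS hb k)
  rwa [smul_single, smul_eq_mul, inv_mul_cancel₀ hk] at h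

theorem oL_inl (m : ℤ) (a : ℤ →₀ ℂ) :
    oL m (inl ℂ _ _ a) = inl ℂ _ _ (wop (fun n => -(n : ℂ)) m a) := by
  simp [oL]

theorem oL_inr (m : ℤ) (b : ℤ →₀ ℂ) :
    oL m (inr ℂ _ _ b) = inr ℂ _ _ (wop (fun k => -((k : ℂ) + (m : ℂ) / 2)) m b) := by
  simp [oL]

theorem oH_zero_apply (v : VV) : oH 0 v = inr ℂ _ _ v.2 := by
  simp [oH, wop_one_zero]

theorem oH_inr (m : ℤ) (b : ℤ →₀ ℂ) :
    oH m (inr ℂ _ _ b) = inr ℂ _ _ (wop (fun _ => 1) m b) := by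
  simp [oH]

theorem oGp_inl (m : ℤ) (a : ℤ →₀ ℂ) :
    oGp m (inl ℂ _ _ a) = inr ℂ _ _ (wop (fun n => -2 * (n : ℂ)) m a) := by
  simp [oGp]

theorem oGm_inr (m : ℤ) (b : ℤ →₀ ℂ) :
    oGm m (inr ℂ _ _ b) = inl ℂ _ _ (wop (fun _ => 1) m b) := by
  simp [oGm]

theorem mem_Kone_of_forall {v : VV} (h₂ : v.2 = 0) (h₁ : ∀ n ≠ 0, v.1 n = 0) : v ∈ Kone := by
  refine Submodule.mem_span_singleton.2 ⟨v.1 0, Prod.ext ?_ (by simp [h₂])⟩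
  ext n
  rcases eq_or_ne n 0 with rfl | hn
  · simp
  · simp [h₁ n hn, hn]

section Invariant

variable {N : Submodule ℂ VV}

theorem exists_inr_single_one_mem (hL : ∀ m : ℤ, ∀ v ∈ N, oL m v ∈ N)
    (hH : ∀ m : ℤ, ∀ v ∈ N, oH m v ∈ N) (hGp : ∀ m : ℤ, ∀ v ∈ N, oGp m v ∈ N)
    {v : VV} (hv : v ∈ N) (hvK : v ∉ Kone) : ∃ k, inr ℂ _ _ (single k 1) ∈ N := by
  have hbarred : N.comap (inr ℂ _ _) ≤ (N.comap (inr ℂ _ _)).comap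
      (wop (fun k => -((k : ℂ) + ((0 : ℤ) : ℂ) / 2)) 0) := fun b hb => by
    simpa only [Submodule.mem_comap, oL_inr] using hL 0 _ hb
  have hinj_barred : Function.Injective fun k : ℤ => -((k : ℂ) + ((0 : ℤ) : ℂ) / 2) :=
    fun j k h => by simpa using h
  by_cases hv₂ : v.2 = 0
  · obtain ⟨n, hn, hvn⟩ : ∃ n ≠ 0, v.1 n ≠ 0 := by
      by_contra! h
      exact hvK (mem_Kone_of_forall hv₂ h)
    have hunbarred : N.comap (inl ℂ _ _) ≤ (N.comap (inl ℂ _ _)).comap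
        (wop (fun n => -(n : ℂ)) 0) := fun a ha => by
      simpa only [Submodule.mem_comap, oL_inl] using hL 0 _ ha
    have hv₁ : inl ℂ _ _ v.1 ∈ N := by
      rwa [LinearMap.inl_apply, ← hv₂]
    have hn₁ := single_one_mem_of_wop_zero_invariant (fun j k h => by simpa using h)
      hunbarred hv₁ hvn
    refine ⟨n, single_one_mem_of_wop_zero_invariant hinj_barred hbarred
      (b := single n (-2 * (n : ℂ))) ?_ (by simpa using hn)⟩
    simpa only [Submodule.mem_comap, oGp_inl, wop_single, zero_add, mul_one] using hGp 0 _ hn₁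
  · obtain ⟨k, hk⟩ := Finsupp.ne_iff.1 hv₂
    exact ⟨k, single_one_mem_of_wop_zero_invariant hinj_barred hbarred
      (by simpa only [Submodule.mem_comap, oH_zero_apply] using hH 0 v hv) hk⟩

theorem eq_top_of_inr_single_one_mem (hH : ∀ m : ℤ, ∀ v ∈ N, oH m v ∈ N)
    (hGm : ∀ m : ℤ, ∀ v ∈ N, oGm m v ∈ N) {k : ℤ}
    (hk : inr ℂ _ _ (single k 1) ∈ N) : N = ⊤ := by
  have hinr : N.comap (inr ℂ _ _) = ⊤ := eq_top_of_forall_single_one_mem fun j => by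
    simpa only [Submodule.mem_comap, oH_inr, wop_single, sub_add_cancel, mul_one] using
      hH (j - k) _ hk
  have hinl : N.comap (inl ℂ _ _) = ⊤ := eq_top_of_forall_single_one_mem fun n => by
    simpa only [Submodule.mem_comap, oGm_inr, wop_single, sub_add_cancel, mul_one] using
      hGm (n - k) _ hk
  rw [eq_top_iff, ← LinearMap.sup_range_inl_inr]
  exact sup_le (LinearMap.range_le_iff_comap.2 hinl) (LinearMap.range_le_iff_comap.2 hinr)

end Invariant

/-- Simplicity of the quotient module: in the lattice of submodules of
`ℂ[t,t⁻¹] ⊕ ℂ[t,t⁻¹]‾`, any submodule containing `ℂ·1` and invariant under all the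
operators `L_m, H_m, G^±_m` is either `ℂ·1` or everything; equivalently, the quotient
`𝒢`-module `(ℂ[t^{±1}] ⊕ ℂ[t^{±1}]‾)/ℂ` has no proper nonzero invariant subspace. -/
theorem stmt16 (N : Submodule ℂ VV) (hK : Kone ≤ N)
    (hL : ∀ m : ℤ, ∀ v ∈ N, oL m v ∈ N)
    (hH : ∀ m : ℤ, ∀ v ∈ N, oH m v ∈ N)
    (hGp : ∀ m : ℤ, ∀ v ∈ N, oGp m v ∈ N)
    (hGm : ∀ m : ℤ, ∀ v ∈ N, oGm m v ∈ N) :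
    N = Kone ∨ N = ⊤ := by
  by_cases hNK : N ≤ Kone
  · exact Or.inl (le_antisymm hNK hK)
  obtain ⟨v, hv, hvK⟩ := SetLike.not_le_iff_exists.mp hNK
  obtain ⟨k, hk⟩ := exists_inr_single_one_mem hL hH hGp hv hvK
  exact Or.inr (eq_top_of_inr_single_one_mem hH hGm hk)
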